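/- For every composition λ ∈ Λ(n,r), one has Σ_{j=1}^{λ_1} u_{λ,1}·T_1·T_2⋯T_{j−1} = q^{2(λ_1−1)}·f_n(ω_{i_λ}), where ω_{i_λ} := ω_1^{⊗λ_1}⊗ω_2^{⊗λ_2}⊗⋯⊗ω_n^{⊗λ_n}. (This identity expresses the compatibility (ζ_r ∘ Ev_a)(E_n) = (ẽv_a ∘ ζ_{Δ,r})(E_n) of the evaluation maps on the weight vector ω_{i_λ}.) -/
import Mathlib

/-!
Statement 3: the key identity in Proposition 5.5 of Du–Fu,
`∑_{j=1}^{λ_1} u_{λ,1}·T_1⋯T_{j−1} = q^{2(λ_1−1)}·f_n(ω_{i_λ})` for `λ ∈ Λ(n,r)`.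

We model the tensor space `Ω_n^{⊗r}` inside the free ℂ-module on tuples `ℕ → ℕ`
(positions are 0-based; positions `≥ r` are never touched by the operators involved).
-/

open Finsupp

/-- The (right) action of the Hecke generator `T_{k+1}` (1-based) on the tensor space,
acting on the (0-based) positions `k` and `k+1`. -/
noncomputable def TOp (q : ℂ) (k : ℕ) :
    ((ℕ → ℕ) →₀ ℂ) →ₗ[ℂ] ((ℕ → ℕ) →₀ ℂ) :=
  Finsupp.lift ((ℕ → ℕ) →₀ ℂ) ℂ (ℕ → ℕ) fun f =>
    if f k = f (k + 1) then q ^ 2 • Finsupp.single f 1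
    else if f k < f (k + 1) then q • Finsupp.single (f ∘ Equiv.swap k (k + 1)) 1
    else q • Finsupp.single (f ∘ Equiv.swap k (k + 1)) 1 + (q ^ 2 - 1) • Finsupp.single f 1

/-- The tuple `i_λ` (block `i` has length `λ_i`; `lam` is 1-based). -/
def iLam (n : ℕ) (lam : ℕ → ℕ) : ℕ → ℕ := fun p =>
  1 + ((Finset.Icc 1 n).filter (fun i => (∑ j ∈ Finset.Icc 1 i, lam j) ≤ p)).card

/-- The basis vector `u_{λ,j}`: the tuple `i_λ` with the entry at (1-based) position `j`
replaced by `n`. -/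
noncomputable def uLam (n : ℕ) (lam : ℕ → ℕ) (j : ℕ) : (ℕ → ℕ) →₀ ℂ :=
  Finsupp.single (fun p => if p = j - 1 then n else iLam n lam p) 1

/-- The diagonal coefficient of `K̃_i⁻¹` on `ω_v`: `q^{-δ_{i,v}+δ_{i+1,v}}`. -/
noncomputable def Kcoef (q : ℂ) (i : ℕ) (v : ℕ) : ℂ :=
  if v = i then q⁻¹ else if v = i + 1 then q else 1

/-- The operator `Δ^{(r)}(F_i) = ∑_{s=1}^r (K̃_i⁻¹)^{⊗(s-1)} ⊗ F_i ⊗ 1^{⊗(r-s)}`. -/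
noncomputable def DF (q : ℂ) (r i : ℕ) :
    ((ℕ → ℕ) →₀ ℂ) →ₗ[ℂ] ((ℕ → ℕ) →₀ ℂ) :=
  Finsupp.lift ((ℕ → ℕ) →₀ ℂ) ℂ (ℕ → ℕ) fun f =>
    ∑ s ∈ Finset.range r, (∏ t ∈ Finset.range s, Kcoef q i (f t)) •
      (if f s = i then Finsupp.single (Function.update f s (i + 1)) (1 : ℂ) else 0)

/-- The operators `f_k`: `f_2 = Δ^{(r)}(F_1)` and
`f_k = Δ^{(r)}(F_{k-1}) ∘ f_{k-1} - q⁻¹ · f_{k-1} ∘ Δ^{(r)}(F_{k-1})`. -/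
noncomputable def fk (q : ℂ) (r : ℕ) :
    ℕ → (((ℕ → ℕ) →₀ ℂ) →ₗ[ℂ] ((ℕ → ℕ) →₀ ℂ))
  | 0 => 0
  | 1 => 0
  | 2 => DF q r 1
  | (k + 3) => DF q r (k + 2) ∘ₗ fk q r (k + 2)
      - q⁻¹ • (fk q r (k + 2) ∘ₗ DF q r (k + 2))

/-! ### Auxiliary lemmas -/

lemma DF_single (q : ℂ) (r i : ℕ) (g : ℕ → ℕ) :
    DF q r i (Finsupp.single g 1) =
      ∑ s ∈ (Finset.range r).filter (fun s => g s = i),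
        (∏ t ∈ Finset.range s, Kcoef q i (g t)) •
          Finsupp.single (Function.update g s (i + 1)) (1 : ℂ) := by
  simp only [DF]
  rw [Finsupp.lift_apply, Finsupp.sum_single_index (by simp), one_smul, Finset.sum_filter]
  exact Finset.sum_congr rfl fun s _ => by split <;> simp

lemma TOp_single (q : ℂ) (k : ℕ) (f : ℕ → ℕ) :
    TOp q k (Finsupp.single f 1) =
      if f k = f (k + 1) then q ^ 2 • Finsupp.single f 1
      else if f k < f (k + 1) then q • Finsupp.single (f ∘ Equiv.swap k (k + 1)) 1
      else q • Finsupp.single (f ∘ Equiv.swap k (k + 1)) 1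
        + (q ^ 2 - 1) • Finsupp.single f 1 := by
  simp only [TOp]
  rw [Finsupp.lift_apply, Finsupp.sum_single_index (by simp), one_smul]

lemma fk_succ (q : ℂ) (r k : ℕ) (hk : 2 ≤ k) :
    fk q r (k + 1) = DF q r k ∘ₗ fk q r k - q⁻¹ • (fk q r k ∘ₗ DF q r k) := by
  obtain ⟨m, rfl⟩ : ∃ m, k = m + 2 := ⟨k - 2, by omega⟩
  rfl

/-- The key quantum-group computation: on any basis tuple whose entries equal `1`
exactly on `[0, a)`, `f_k` acts by `∑_{m<a} q^{-m} (tuple with position m set to k)`. -/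
lemma fk_single (q : ℂ) (r : ℕ) {k : ℕ} (hk : 2 ≤ k) :
    ∀ (a : ℕ) (g : ℕ → ℕ), a ≤ r → (∀ p, g p = 1 ↔ p < a) →
      fk q r k (Finsupp.single g 1) =
        ∑ m ∈ Finset.range a, (q⁻¹) ^ m • Finsupp.single (Function.update g m k) (1 : ℂ) := by
  induction k, hk using Nat.le_induction with
  | base =>
    intro a g ha h1
    show DF q r 1 (Finsupp.single g 1) = _
    rw [DF_single]
    have hfil : (Finset.range r).filter (fun s => g s = 1) = Finset.range a := by
      ext s; simp only [Finset.mem_filter, Finset.mem_range, h1]; omega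
    rw [hfil]
    refine Finset.sum_congr rfl fun s hs => ?_
    rw [Finset.mem_range] at hs
    have hprod : (∏ t ∈ Finset.range s, Kcoef q 1 (g t)) = (q⁻¹) ^ s := by
      rw [show (q⁻¹) ^ s = ∏ _t ∈ Finset.range s, q⁻¹ by
        rw [Finset.prod_const, Finset.card_range]]
      refine Finset.prod_congr rfl fun t ht => ?_
      rw [Finset.mem_range] at ht
      rw [(h1 t).2 (by omega)]
      simp [Kcoef]
    rw [hprod]
  | succ k hk ih =>
    intro a g ha h1
    have hone : ∀ t, t < a → g t = 1 := fun t ht => (h1 t).2 ht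
    have hblk : ∀ s, g s = k → a ≤ s := fun s hs => by
      by_contra h
      push_neg at h
      have := hone s h
      omega
    have hK1 : Kcoef q k 1 = 1 := by
      unfold Kcoef
      rw [if_neg (by omega), if_neg (by omega)]
    have hKk : Kcoef q k k = q⁻¹ := by
      unfold Kcoef
      rw [if_pos rfl]
    rw [fk_succ q r k hk]
    simp only [LinearMap.sub_apply, LinearMap.comp_apply, LinearMap.smul_apply]
    rw [ih a g ha h1, DF_single, map_sum]
    -- DF applied to each `single (update g m k)`
    have hDFm : ∀ m ∈ Finset.range a,
        DF q r k ((q⁻¹) ^ m • Finsupp.single (Function.update g m k) (1 : ℂ))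
          = (q⁻¹) ^ m • (Finsupp.single (Function.update g m (k + 1)) (1 : ℂ)
            + ∑ s ∈ (Finset.range r).filter (fun s => g s = k),
                (q⁻¹ * ∏ t ∈ Finset.range s, Kcoef q k (g t)) •
                  Finsupp.single
                    (Function.update (Function.update g s (k + 1)) m k) (1 : ℂ)) := by
      intro m hm
      rw [Finset.mem_range] at hm
      rw [map_smul, DF_single]
      congr 1
      have hfil : (Finset.range r).filter (fun s => Function.update g m k s = k)
          = insert m ((Finset.range r).filter (fun s => g s = k)) := by
        ext s
        simp only [Finset.mem_insert, Finset.mem_filter, Finset.mem_range,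
          Function.update_apply]
        constructor
        · rintro ⟨hsr, hs⟩
          by_cases h : s = m
          · exact Or.inl h
          · rw [if_neg h] at hs
            exact Or.inr ⟨hsr, hs⟩
        · rintro (rfl | ⟨hsr, hs⟩)
          · exact ⟨by omega, by simp⟩
          · refine ⟨hsr, ?_⟩
            have hsm : s ≠ m := by
              intro h
              subst h
              rw [hone s hm] at hs
              omega
            rw [if_neg hsm]
            exact hs
      have hmnot : m ∉ (Finset.range r).filter (fun s => g s = k) := by
        simp only [Finset.mem_filter, Finset.mem_range, not_and]
        intro _
        rw [hone m hm]
        omega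
      rw [hfil, Finset.sum_insert hmnot]
      congr 1
      · rw [Function.update_idem]
        have hp1 : (∏ t ∈ Finset.range m, Kcoef q k (Function.update g m k t)) = 1 := by
          apply Finset.prod_eq_one
          intro t ht
          rw [Finset.mem_range] at ht
          rw [Function.update_apply, if_neg (by omega), hone t (by omega), hK1]
        rw [hp1, one_smul]
      · refine Finset.sum_congr rfl fun s hs => ?_
        rw [Finset.mem_filter, Finset.mem_range] at hs
        have has : a ≤ s := hblk s hs.2
        have hms : m ≠ s := by omega
        have hmem : m ∈ Finset.range s := Finset.mem_range.2 (by omega)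
        have e1 : (∏ t ∈ Finset.range s, Kcoef q k (Function.update g m k t))
            = Kcoef q k (Function.update g m k m) *
                ∏ t ∈ (Finset.range s).erase m, Kcoef q k (Function.update g m k t) :=
          (Finset.mul_prod_erase _ _ hmem).symm
        have e2 : (∏ t ∈ Finset.range s, Kcoef q k (g t))
            = Kcoef q k (g m) * ∏ t ∈ (Finset.range s).erase m, Kcoef q k (g t) :=
          (Finset.mul_prod_erase _ _ hmem).symm
        have e3 : (∏ t ∈ (Finset.range s).erase m, Kcoef q k (Function.update g m k t))
            = ∏ t ∈ (Finset.range s).erase m, Kcoef q k (g t) :=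
          Finset.prod_congr rfl fun t ht => by
            rw [Function.update_apply, if_neg (Finset.ne_of_mem_erase ht)]
        rw [Function.update_comm hms, e1, e2, e3, Function.update_self,
          hone m hm, hK1, hKk, one_mul]
    rw [Finset.sum_congr rfl hDFm]
    -- `fk k` applied to `DF k (single g)`
    have hfkDF : fk q r k (∑ s ∈ (Finset.range r).filter (fun s => g s = k),
        (∏ t ∈ Finset.range s, Kcoef q k (g t)) •
          Finsupp.single (Function.update g s (k + 1)) (1 : ℂ))
        = ∑ s ∈ (Finset.range r).filter (fun s => g s = k),
            (∏ t ∈ Finset.range s, Kcoef q k (g t)) •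
              ∑ m ∈ Finset.range a, (q⁻¹) ^ m •
                Finsupp.single
                  (Function.update (Function.update g s (k + 1)) m k) (1 : ℂ) := by
      rw [map_sum]
      refine Finset.sum_congr rfl fun s hs => ?_
      rw [Finset.mem_filter, Finset.mem_range] at hs
      rw [map_smul]
      congr 1
      refine ih a _ ha fun p => ?_
      rw [Function.update_apply]
      by_cases hp : p = s
      · rw [if_pos hp]
        subst hp
        have := hblk p hs.2
        constructor
        · intro h; omega
        · intro h; omega
      · rw [if_neg hp]
        exact h1 p
    rw [hfkDF]
    -- the double sums cancel
    have e4 : (∑ m ∈ Finset.range a, (q⁻¹) ^ m •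
          (Finsupp.single (Function.update g m (k + 1)) (1 : ℂ)
            + ∑ s ∈ (Finset.range r).filter (fun s => g s = k),
                (q⁻¹ * ∏ t ∈ Finset.range s, Kcoef q k (g t)) •
                  Finsupp.single
                    (Function.update (Function.update g s (k + 1)) m k) (1 : ℂ)))
        = (∑ m ∈ Finset.range a, (q⁻¹) ^ m •
            Finsupp.single (Function.update g m (k + 1)) (1 : ℂ))
          + ∑ m ∈ Finset.range a, ∑ s ∈ (Finset.range r).filter (fun s => g s = k),
              ((q⁻¹) ^ m * (q⁻¹ * ∏ t ∈ Finset.range s, Kcoef q k (g t))) •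
                Finsupp.single
                  (Function.update (Function.update g s (k + 1)) m k) (1 : ℂ) := by
      rw [← Finset.sum_add_distrib]
      refine Finset.sum_congr rfl fun m _ => ?_
      rw [smul_add, Finset.smul_sum]
      congr 1
      exact Finset.sum_congr rfl fun s _ => smul_smul _ _ _
    have e5 : q⁻¹ • (∑ s ∈ (Finset.range r).filter (fun s => g s = k),
          (∏ t ∈ Finset.range s, Kcoef q k (g t)) •
            ∑ m ∈ Finset.range a, (q⁻¹) ^ m •
              Finsupp.single
                (Function.update (Function.update g s (k + 1)) m k) (1 : ℂ))
        = ∑ m ∈ Finset.range a, ∑ s ∈ (Finset.range r).filter (fun s => g s = k),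
            ((q⁻¹) ^ m * (q⁻¹ * ∏ t ∈ Finset.range s, Kcoef q k (g t))) •
              Finsupp.single
                (Function.update (Function.update g s (k + 1)) m k) (1 : ℂ) := by
      rw [Finset.smul_sum, Finset.sum_comm]
      refine Finset.sum_congr rfl fun m _ => ?_
      rw [smul_smul, Finset.smul_sum]
      refine Finset.sum_congr rfl fun s _ => ?_
      rw [smul_smul]
      ring_nf
    rw [e4, e5, add_sub_cancel_right]

/-- Reindexing `∑_{j∈[1,a]} F (j-1) = ∑_{c<a} F c`. -/
lemma sum_Icc_pred {M : Type*} [AddCommMonoid M] (F : ℕ → M) (a : ℕ) :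
    ∑ j ∈ Finset.Icc 1 a, F (j - 1) = ∑ c ∈ Finset.range a, F c := by
  induction a with
  | zero => simp
  | succ a ih =>
    rw [Finset.sum_Icc_succ_top (by omega), Finset.sum_range_succ, ih, Nat.add_sub_cancel]

lemma TOp_w_self (q : ℂ) {n a : ℕ} (hn : 2 ≤ n) {g : ℕ → ℕ}
    (h1 : ∀ p, g p = 1 ↔ p < a) {c : ℕ} (hc : c + 1 < a) :
    TOp q c (Finsupp.single (Function.update g c n) 1) =
      q • Finsupp.single (Function.update g (c + 1) n) (1 : ℂ)
      + (q ^ 2 - 1) • Finsupp.single (Function.update g c n) (1 : ℂ) := by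
  rw [TOp_single]
  have hfc : Function.update g c n c = n := Function.update_self _ _ _
  have hfc1 : Function.update g c n (c + 1) = 1 := by
    rw [Function.update_apply, if_neg (by omega)]
    exact (h1 _).2 (by omega)
  rw [hfc, hfc1, if_neg (by omega), if_neg (by omega)]
  have hswap : (Function.update g c n) ∘ (Equiv.swap c (c + 1)) = Function.update g (c + 1) n := by
    funext p
    simp only [Function.comp_apply]
    by_cases hp : p = c
    · subst hp
      rw [Equiv.swap_apply_left, hfc1, Function.update_apply, if_neg (by omega)]
      exact ((h1 _).2 (by omega)).symm
    · by_cases hp2 : p = c + 1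
      · subst hp2
        rw [Equiv.swap_apply_right, hfc, Function.update_self]
      · rw [Equiv.swap_apply_of_ne_of_ne hp hp2, Function.update_apply, if_neg hp,
          Function.update_apply, if_neg hp2]
  rw [hswap]

lemma TOp_w_lt (q : ℂ) {n a : ℕ} {g : ℕ → ℕ}
    (h1 : ∀ p, g p = 1 ↔ p < a) {c m : ℕ} (hc : c + 1 < a) (hm : m < c) :
    TOp q c (Finsupp.single (Function.update g m n) 1) =
      q ^ 2 • Finsupp.single (Function.update g m n) (1 : ℂ) := by
  rw [TOp_single]
  have h2 : Function.update g m n c = 1 := by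
    rw [Function.update_apply, if_neg (by omega)]
    exact (h1 _).2 (by omega)
  have h3 : Function.update g m n (c + 1) = 1 := by
    rw [Function.update_apply, if_neg (by omega)]
    exact (h1 _).2 (by omega)
  rw [h2, h3, if_pos rfl]

/-- The Hecke-side computation: `u_{λ,1}·T_1⋯T_c` expanded in the `u_{λ,m}` basis. -/
lemma foldl_T (q : ℂ) {n a : ℕ} (hn : 2 ≤ n) {g : ℕ → ℕ}
    (h1 : ∀ p, g p = 1 ↔ p < a) :
    ∀ c, c < a →
      (List.range c).foldl (fun v i => TOp q i v)
          (Finsupp.single (Function.update g 0 n) (1 : ℂ))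
        = q ^ c • Finsupp.single (Function.update g c n) (1 : ℂ)
          + ∑ m ∈ Finset.range c, ((q ^ 2 - 1) * q ^ m * (q ^ 2) ^ (c - 1 - m)) •
              Finsupp.single (Function.update g m n) (1 : ℂ) := by
  intro c
  induction c with
  | zero => intro _; simp
  | succ c ihc =>
    intro hca
    rw [List.range_succ, List.foldl_append, ihc (by omega)]
    simp only [List.foldl_cons, List.foldl_nil]
    rw [map_add, map_smul, map_sum, TOp_w_self q hn h1 (by omega : c + 1 < a)]
    have hterm : ∀ m ∈ Finset.range c,
        TOp q c (((q ^ 2 - 1) * q ^ m * (q ^ 2) ^ (c - 1 - m)) •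
            Finsupp.single (Function.update g m n) (1 : ℂ))
          = ((q ^ 2 - 1) * q ^ m * (q ^ 2) ^ (c + 1 - 1 - m)) •
              Finsupp.single (Function.update g m n) (1 : ℂ) := by
      intro m hm
      rw [Finset.mem_range] at hm
      rw [map_smul, TOp_w_lt q h1 (by omega : c + 1 < a) hm, smul_smul]
      congr 1
      have : c + 1 - 1 - m = (c - 1 - m) + 1 := by omega
      rw [this, pow_succ]
      ring
    rw [Finset.sum_congr rfl hterm, Finset.sum_range_succ]
    have t1 : q ^ c • (q • Finsupp.single (Function.update g (c + 1) n) (1 : ℂ)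
        + (q ^ 2 - 1) • Finsupp.single (Function.update g c n) (1 : ℂ))
        = q ^ (c + 1) • Finsupp.single (Function.update g (c + 1) n) (1 : ℂ)
          + ((q ^ 2 - 1) * q ^ c * (q ^ 2) ^ (c + 1 - 1 - c)) •
              Finsupp.single (Function.update g c n) (1 : ℂ) := by
      rw [smul_add]
      congr 1
      · rw [smul_smul, pow_succ]
      · rw [smul_smul]
        have h0 : c + 1 - 1 - c = 0 := by omega
        rw [h0]
        ring
    rw [t1]
    abel

/-- Sum of the Hecke-side expansions. -/
lemma sum_foldl (q : ℂ) {n a : ℕ} (hn : 2 ≤ n) {g : ℕ → ℕ}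
    (h1 : ∀ p, g p = 1 ↔ p < a) :
    ∀ A, A ≤ a →
      ∑ c ∈ Finset.range A, (List.range c).foldl (fun v i => TOp q i v)
          (Finsupp.single (Function.update g 0 n) (1 : ℂ))
        = ∑ m ∈ Finset.range A, (q ^ m * (q ^ 2) ^ (A - 1 - m)) •
            Finsupp.single (Function.update g m n) (1 : ℂ) := by
  intro A
  induction A with
  | zero => intro _; simp
  | succ A ihA =>
    intro hA
    rw [Finset.sum_range_succ, ihA (by omega), foldl_T q hn h1 A (by omega)]
    rw [Finset.sum_range_succ (fun m => (q ^ m * (q ^ 2) ^ (A + 1 - 1 - m)) •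
      Finsupp.single (Function.update g m n) (1 : ℂ))]
    have hc : ∀ m ∈ Finset.range A,
        (q ^ m * (q ^ 2) ^ (A + 1 - 1 - m)) •
            Finsupp.single (Function.update g m n) (1 : ℂ)
          = (q ^ m * (q ^ 2) ^ (A - 1 - m)) •
              Finsupp.single (Function.update g m n) (1 : ℂ)
            + ((q ^ 2 - 1) * q ^ m * (q ^ 2) ^ (A - 1 - m)) •
              Finsupp.single (Function.update g m n) (1 : ℂ) := by
      intro m hm
      rw [Finset.mem_range] at hm
      rw [← add_smul]
      congr 1
      have h' : A + 1 - 1 - m = (A - 1 - m) + 1 := by omega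
      rw [h', pow_succ]
      ring
    rw [Finset.sum_congr rfl hc, Finset.sum_add_distrib]
    have hA1 : (q ^ A * (q ^ 2) ^ (A + 1 - 1 - A)) •
        Finsupp.single (Function.update g A n) (1 : ℂ)
        = q ^ A • Finsupp.single (Function.update g A n) (1 : ℂ) := by
      congr 1
      have : A + 1 - 1 - A = 0 := by omega
      rw [this]
      ring
    rw [hA1]
    abel

lemma iLam_eq_one_iff {n : ℕ} (hn : 1 ≤ n) (lam : ℕ → ℕ) (p : ℕ) :
    iLam n lam p = 1 ↔ p < lam 1 := by
  unfold iLam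
  have hcard : (1 + ((Finset.Icc 1 n).filter
      (fun i => (∑ j ∈ Finset.Icc 1 i, lam j) ≤ p)).card = 1)
      ↔ ((Finset.Icc 1 n).filter (fun i => (∑ j ∈ Finset.Icc 1 i, lam j) ≤ p)) = ∅ := by
    rw [← Finset.card_eq_zero]
    omega
  rw [hcard, Finset.filter_eq_empty_iff]
  constructor
  · intro h
    have := h (Finset.mem_Icc.2 ⟨le_refl 1, hn⟩)
    rw [Finset.Icc_self, Finset.sum_singleton] at this
    omega
  · intro h i hi
    rw [Finset.mem_Icc] at hi
    have hle : lam 1 ≤ ∑ j ∈ Finset.Icc 1 i, lam j :=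
      Finset.single_le_sum (fun j _ => Nat.zero_le _)
        (Finset.mem_Icc.2 ⟨le_refl 1, hi.1⟩)
    omega

theorem stmt3 (q : ℂ) (hq : q ≠ 0) (n r : ℕ) (hn : 2 ≤ n) (hr : 1 ≤ r)
    (lam : ℕ → ℕ) (hsum : (∑ i ∈ Finset.Icc 1 n, lam i) = r) :
    (∑ j ∈ Finset.Icc 1 (lam 1),
        (List.range (j - 1)).foldl (fun v i => TOp q i v) (uLam n lam 1))
      = q ^ (2 * ((lam 1 : ℤ) - 1)) • fk q r n (Finsupp.single (iLam n lam) 1) := by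
  have h1 : ∀ p, iLam n lam p = 1 ↔ p < lam 1 := iLam_eq_one_iff (by omega) lam
  have ha : lam 1 ≤ r := by
    rw [← hsum]
    exact Finset.single_le_sum (fun j _ => Nat.zero_le _)
      (Finset.mem_Icc.2 ⟨le_refl 1, by omega⟩)
  have hu : uLam n lam 1 = Finsupp.single (Function.update (iLam n lam) 0 n) (1 : ℂ) := by
    unfold uLam
    congr 1
    funext p
    rw [Function.update_apply]
  rw [hu]
  have hL : (∑ j ∈ Finset.Icc 1 (lam 1),
      (List.range (j - 1)).foldl (fun v i => TOp q i v)
        (Finsupp.single (Function.update (iLam n lam) 0 n) (1 : ℂ)))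
      = ∑ c ∈ Finset.range (lam 1), (List.range c).foldl (fun v i => TOp q i v)
          (Finsupp.single (Function.update (iLam n lam) 0 n) (1 : ℂ)) :=
    sum_Icc_pred (fun c => (List.range c).foldl (fun v i => TOp q i v)
      (Finsupp.single (Function.update (iLam n lam) 0 n) (1 : ℂ))) (lam 1)
  rw [hL, sum_foldl q hn h1 (lam 1) (le_refl _), fk_single q r hn (lam 1) (iLam n lam) ha h1]
  rw [Finset.smul_sum]
  refine Finset.sum_congr rfl fun m hm => ?_
  rw [Finset.mem_range] at hm
  rw [smul_smul]
  congr 1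
  have h2 : ((q : ℂ) ^ 2) ^ (lam 1 - 1 - m) = q ^ ((2 * (lam 1 - 1 - m) : ℕ) : ℤ) := by
    rw [← pow_mul, zpow_natCast]
  have h3 : (q : ℂ) ^ m = q ^ ((m : ℕ) : ℤ) := (zpow_natCast q m).symm
  have h4 : ((q : ℂ)⁻¹) ^ m = q ^ (-(m : ℤ)) := by
    rw [zpow_neg, zpow_natCast, ← inv_pow]
  rw [h2, h3, h4, ← zpow_add₀ hq, ← zpow_add₀ hq]
  congr 1
  omega
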